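/- Let G be a limit group (a finitely generated fully residually free group) having no subgroup isomorphic to ℤ × ℤ. Let a, b ∈ G be elements with a ≠ 1 and b ≠ 1, neither of which is a proper power (i.e., for every x ∈ G and integer n, a = xⁿ implies n = 1 or n = −1, and likewise for b), and suppose a is conjugate in G to neither b nor b⁻¹. Then for all x, y ∈ G, the intersection of the conjugate subgroups x⁻¹⟨a⟩x and y⁻¹⟨b⟩y is trivial. -/

import Mathlib

def FullyResiduallyFree (G : Type*) [Group G] : Prop :=
  ∀ S : Finset G, (1 : G) ∉ S →
    ∃ h : G →* FreeGroup (Fin 2), ∀ s ∈ S, h s ≠ 1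

/-!
Free groups are torsion-free and commutative-transitive. For the latter, the centralizer of
`v ≠ 1` is free by Nielsen–Schreier and has `v` in its centre; a nontrivial central element of a
free group forces it to have a single generator, because an element commuting with a generator
lies in the cyclic group it generates (the subgroup the two generate is abelian, hence cyclic,
and a generator is not a proper power). Both properties are detected by finitely many
inequalities, so they pass to fully residually free groups.

If `c = x⁻¹ a x` and `d = y⁻¹ b y` have a common nontrivial power, they therefore commute, and
torsion-freeness with a Bézout argument gives a common root `s`, `c = s ^ p`, `d = s ^ q`. Since
neither `a` nor `b` is a proper power, `p, q = ±1`, so `a` is conjugate to `b` or to `b⁻¹`.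
-/

namespace FreeGroup

variable {α : Type*}

theorem not_commute_of_ne {i j : α} (hij : i ≠ j) : ¬Commute (of i) (of j) := by
  classical
  intro h
  have := h.map (lift fun k => if k = i then Equiv.swap (0 : Fin 3) 1 else Equiv.swap 1 2)
  simp only [lift_apply_of, if_pos, if_neg hij.symm] at this
  exact absurd this.eq (by decide)

theorem subsingleton_of_isMulCommutative [IsMulCommutative (FreeGroup α)] : Subsingleton α :=
  ⟨fun _ _ => by_contra fun hij => not_commute_of_ne hij (mul_comm' _ _)⟩

instance isCyclic [Subsingleton α] : IsCyclic (FreeGroup α) := by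
  cases isEmpty_or_nonempty α with
  | inl => infer_instance
  | inr h =>
    obtain ⟨i⟩ := h
    have : Unique α := uniqueOfSubsingleton i
    infer_instance

def exponentSum [DecidableEq α] (i : α) : FreeGroup α →* Multiplicative ℤ :=
  lift (Pi.mulSingle i (.ofAdd 1))

theorem exponentSum_of_self [DecidableEq α] (i : α) : exponentSum i (of i) = .ofAdd 1 := by
  simp [exponentSum]

theorem exponentSum_of_of_ne [DecidableEq α] {i j : α} (h : j ≠ i) : exponentSum i (of j) = 1 := by
  simp [exponentSum, h]

theorem eq_one_or_neg_one_of_of_eq_zpow {i : α} {s : FreeGroup α} {p : ℤ} (h : of i = s ^ p) :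
    p = 1 ∨ p = -1 := by
  classical
  have := congrArg (fun g => (exponentSum i g).toAdd) h
  simp only [exponentSum_of_self, map_zpow, toAdd_ofAdd, toAdd_zpow] at this
  exact Int.eq_one_or_neg_one_of_mul_eq_one this.symm

theorem disjoint_zpowers_of {i j : α} (hij : i ≠ j) :
    Disjoint (Subgroup.zpowers (of i)) (Subgroup.zpowers (of j)) := by
  classical
  rw [Subgroup.disjoint_def]
  rintro _ ⟨k, rfl⟩ ⟨l, hl⟩
  have := congrArg (fun g => (exponentSum i g).toAdd) hl
  simp only [map_zpow, exponentSum_of_of_ne hij.symm, one_zpow, toAdd_one, exponentSum_of_self,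
    toAdd_zpow, toAdd_ofAdd, Int.zsmul_eq_mul, mul_one] at this
  simp [this]

end FreeGroup

namespace IsFreeGroup

variable {F : Type*} [Group F] [IsFreeGroup F]

theorem isCyclic_of_subsingleton_generators [Subsingleton (Generators F)] : IsCyclic F :=
  isCyclic_of_surjective (toFreeGroup F).symm (toFreeGroup F).symm.surjective

theorem isCyclic_of_isMulCommutative [IsMulCommutative F] : IsCyclic F := by
  have : IsMulCommutative (FreeGroup (Generators F)) :=
    ⟨⟨fun g h => (toFreeGroup F).symm.injective (by simp only [map_mul, mul_comm'])⟩⟩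
  have := FreeGroup.subsingleton_of_isMulCommutative (α := Generators F)
  exact isCyclic_of_subsingleton_generators

end IsFreeGroup

namespace FreeGroup

variable {α : Type*}

theorem mem_zpowers_of_commute {g : FreeGroup α} {i : α} (h : Commute g (of i)) :
    g ∈ Subgroup.zpowers (of i) := by
  let H := Subgroup.closure {g, of i}
  have hg : g ∈ H := Subgroup.subset_closure (by simp)
  have hi : of i ∈ H := Subgroup.subset_closure (by simp)
  have : IsMulCommutative H := Subgroup.isMulCommutative_closure <| by
    rintro _ (rfl | rfl) _ (rfl | rfl)
    exacts [rfl, h.eq, h.eq.symm, rfl]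
  obtain ⟨s, hs⟩ := (IsFreeGroup.isCyclic_of_isMulCommutative (F := H)).exists_generator
  obtain ⟨p, hp⟩ := hs ⟨of i, hi⟩
  obtain ⟨q, hq⟩ := hs ⟨g, hg⟩
  replace hp : (s : FreeGroup α) ^ p = of i := congrArg Subtype.val hp
  replace hq : (s : FreeGroup α) ^ q = g := congrArg Subtype.val hq
  have hpp : p * p = 1 := by rcases eq_one_or_neg_one_of_of_eq_zpow hp.symm with rfl | rfl <;> rfl
  refine Subgroup.mem_zpowers_iff.mpr ⟨p * q, ?_⟩
  rw [← hq, ← hp, ← zpow_mul, ← mul_assoc, hpp, one_mul]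

theorem subsingleton_of_commute {z : FreeGroup α} (hz : z ≠ 1) (h : ∀ g, Commute z g) :
    Subsingleton α :=
  ⟨fun _ _ => by_contra fun hij => hz <| Subgroup.disjoint_def.mp (disjoint_zpowers_of hij)
    (mem_zpowers_of_commute (h _)) (mem_zpowers_of_commute (h _))⟩

end FreeGroup

namespace IsFreeGroup

variable {F : Type*} [Group F] [IsFreeGroup F]

theorem isCyclic_of_commute {z : F} (hz : z ≠ 1) (h : ∀ g, Commute z g) : IsCyclic F := by
  have := FreeGroup.subsingleton_of_commute ((toFreeGroup F).map_ne_one_iff.mpr hz)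
    fun g => by simpa using (h ((toFreeGroup F).symm g)).map (toFreeGroup F)
  exact isCyclic_of_subsingleton_generators

theorem commute_of_commute_of_ne_one {u v w : F} (hv : v ≠ 1) (hu : Commute v u)
    (hw : Commute v w) : Commute u w := by
  let C := Subgroup.centralizer {v}
  have hvC : v ∈ C := Subgroup.mem_centralizer_singleton_iff.mpr rfl
  have : IsCyclic C := isCyclic_of_commute (z := ⟨v, hvC⟩) (by simpa using hv)
    fun g => Subtype.ext (Subgroup.mem_centralizer_singleton_iff.mp g.2).symm
  exact setLike_mul_comm (s := C)
    (Subgroup.mem_centralizer_singleton_iff.mpr hu.eq.symm)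
    (Subgroup.mem_centralizer_singleton_iff.mpr hw.eq.symm)

end IsFreeGroup

theorem IsConj.zpow {G : Type*} [Group G] {a b : G} (n : ℤ) (h : IsConj a b) :
    IsConj (a ^ n) (b ^ n) := by
  obtain ⟨c, rfl⟩ := isConj_iff.mp h
  exact isConj_iff.mpr ⟨c, conj_zpow.symm⟩

theorem IsConj.exists_eq_zpow {G : Type*} [Group G] {a s : G} {p : ℤ} (h : IsConj a (s ^ p)) :
    ∃ t, a = t ^ p := by
  obtain ⟨c, hc⟩ := isConj_iff.mp h.symm
  exact ⟨c * s * c⁻¹, by rw [conj_zpow, hc]⟩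

theorem Commute.exists_eq_zpow_and_eq_zpow {G : Type*} [Group G] [IsMulTorsionFree G]
    {c d : G} (hcd : Commute c d) {m n : ℤ} (hm : m ≠ 0) (h : c ^ m = d ^ n) :
    ∃ s : G, ∃ p q : ℤ, c = s ^ p ∧ d = s ^ q := by
  obtain ⟨g, m', n', hg, hcop, rfl, rfl⟩ := Int.exists_gcd_one' (Int.gcd_pos_of_ne_zero_left n hm)
  obtain ⟨β, α, hαβ⟩ := Int.isCoprime_iff_gcd_eq_one.mpr hcop
  have hroot : c ^ m' = d ^ n' := by
    rw [← zpow_left_inj (n := (g : ℤ)) (by omega), ← zpow_mul, ← zpow_mul, h]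
  have hpow (k : ℤ) : c ^ (m' * k) = d ^ (n' * k) := by rw [zpow_mul, zpow_mul, hroot]
  refine ⟨c ^ α * d ^ β, n', m', ?_, ?_⟩
  · rw [(hcd.zpow_zpow α β).mul_zpow, ← zpow_mul, ← zpow_mul, mul_comm β, ← hpow, ← zpow_add,
      show α * n' + m' * β = 1 by linarith, zpow_one]
  · rw [(hcd.zpow_zpow α β).mul_zpow, ← zpow_mul, ← zpow_mul, mul_comm α, hpow, ← zpow_add,
      show n' * α + β * m' = 1 by linarith, zpow_one]

theorem isConj_or_isConj_inv_of_isConj_zpow {G : Type*} [Group G] {a b s : G} {p q : ℤ}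
    (hp : p = 1 ∨ p = -1) (hq : q = 1 ∨ q = -1) (ha : IsConj a (s ^ p)) (hb : IsConj b (s ^ q)) :
    IsConj a b ∨ IsConj a b⁻¹ := by
  have hqq : q * q = 1 := by rcases hq with rfl | rfl <;> rfl
  have hab : IsConj a (b ^ (q * p)) := by
    refine ha.trans (IsConj.symm ?_)
    simpa only [← zpow_mul, ← mul_assoc, hqq, one_mul] using hb.zpow (q * p)
  rcases Int.isUnit_iff.mp ((Int.isUnit_iff.mpr hq).mul (Int.isUnit_iff.mpr hp)) with h | h
  · exact .inl (by simpa [h] using hab)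
  · exact .inr (by simpa [h] using hab)

namespace FullyResiduallyFree

variable {G : Type*} [Group G]

theorem isMulTorsionFree (hG : FullyResiduallyFree G) : IsMulTorsionFree G := by
  refine ⟨fun n hn x y hxy => by_contra fun hne => ?_⟩
  obtain ⟨f, hf⟩ := hG {x * y⁻¹} (by simpa [eq_comm, mul_inv_eq_one] using hne)
  refine hf _ (Finset.mem_singleton_self _) ?_
  rw [map_mul, map_inv, mul_inv_eq_one]
  exact pow_left_injective hn (by simpa only [map_pow] using congrArg f hxy)

open scoped commutatorElement in
theorem commute_of_commute_of_ne_one (hG : FullyResiduallyFree G) {u v w : G} (hv : v ≠ 1)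
    (hu : Commute v u) (hw : Commute v w) : Commute u w := by
  classical
  by_contra huw
  rw [← commutatorElement_eq_one_iff_commute] at huw
  obtain ⟨f, hf⟩ := hG ({v, ⁅u, w⁆} : Finset G) (by simp [eq_comm, hv, huw])
  refine hf ⁅u, w⁆ (by simp) ?_
  rw [map_commutatorElement, commutatorElement_eq_one_iff_commute]
  exact IsFreeGroup.commute_of_commute_of_ne_one (hf v (by simp)) (hu.map f) (hw.map f)

end FullyResiduallyFree

theorem conjugates_of_distinct_maximal_cyclic_trivial_intersection_general
    (G : Type*) [Group G]
    (hfrf : FullyResiduallyFree G)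
    (a b : G)
    (hanp : ∀ (x : G) (n : ℤ), a = x ^ n → n = 1 ∨ n = -1)
    (hbnp : ∀ (x : G) (n : ℤ), b = x ^ n → n = 1 ∨ n = -1)
    (hconj : ¬ IsConj a b) (hconjinv : ¬ IsConj a b⁻¹) :
    ∀ x y : G,
      (Subgroup.zpowers a).map (MulAut.conj x⁻¹).toMonoidHom ⊓
        (Subgroup.zpowers b).map (MulAut.conj y⁻¹).toMonoidHom = ⊥ := by
  intro x y
  have := hfrf.isMulTorsionFree
  set c := MulAut.conj x⁻¹ a
  set d := MulAut.conj y⁻¹ b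
  rw [Subgroup.eq_bot_iff_forall]
  intro w hw
  by_contra hw1
  simp only [MonoidHom.map_zpowers, Subgroup.mem_inf, Subgroup.mem_zpowers_iff] at hw
  obtain ⟨⟨m, rfl⟩, n, hn⟩ := hw
  have hm : m ≠ 0 := by rintro rfl; exact hw1 (zpow_zero c)
  have hcd : Commute c d := hfrf.commute_of_commute_of_ne_one hw1
    ((Commute.refl c).zpow_left m) (hn ▸ (Commute.refl d).zpow_left n)
  obtain ⟨s, p, q, hcs, hds⟩ := hcd.exists_eq_zpow_and_eq_zpow hm hn.symm
  have has : IsConj a (s ^ p) := hcs ▸ isConj_iff.mpr ⟨x⁻¹, rfl⟩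
  have hbs : IsConj b (s ^ q) := hds ▸ isConj_iff.mpr ⟨y⁻¹, rfl⟩
  obtain ⟨t, ht⟩ := has.exists_eq_zpow
  obtain ⟨t', ht'⟩ := hbs.exists_eq_zpow
  exact (isConj_or_isConj_inv_of_isConj_zpow (hanp t p ht) (hbnp t' q ht') has hbs).elim
    hconj hconjinv

/-- In a limit group with no `ℤ × ℤ` subgroup, conjugates of the cyclic subgroups
generated by two non-proper-power elements that are conjugate to neither each other
nor each other's inverses intersect trivially. -/
theorem conjugates_of_distinct_maximal_cyclic_trivial_intersection
    (G : Type*) [Group G]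
    (hfg : Group.FG G) (hfrf : FullyResiduallyFree G)
    (hnoZ2 : ∀ H : Subgroup G, ¬ Nonempty (H ≃* (ℤ × ℤ)))
    (a b : G) (ha : a ≠ 1) (hb : b ≠ 1)
    (hanp : ∀ (x : G) (n : ℤ), a = x ^ n → n = 1 ∨ n = -1)
    (hbnp : ∀ (x : G) (n : ℤ), b = x ^ n → n = 1 ∨ n = -1)
    (hconj : ¬ IsConj a b) (hconjinv : ¬ IsConj a b⁻¹) :
    ∀ x y : G,
      (Subgroup.zpowers a).map (MulAut.conj x⁻¹).toMonoidHom ⊓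
        (Subgroup.zpowers b).map (MulAut.conj y⁻¹).toMonoidHom = ⊥ :=
  conjugates_of_distinct_maximal_cyclic_trivial_intersection_general G hfrf a b hanp hbnp hconj
    hconjinv
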